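/- Let G be a connected graph with at least one cut-edge, and let h(G) = max{cfc(K) : K is a connected component of C(G)}, where C(G) is the subgraph induced by the cut-edges of G. Then h(G) ≤ cfc(G) ≤ h(G) + 1. -/

import Mathlib

open SimpleGraph

universe u

/-- An edge coloring makes `G` conflict-free connected: every two distinct vertices are
joined by a path on which some color appears on exactly one edge. -/
def IsCFCColoring {V : Type u} (G : SimpleGraph V) (c : Sym2 V → ℕ) : Prop :=
  ∀ u v : V, u ≠ v → ∃ p : G.Walk u v, p.IsPath ∧
    ∃ color : ℕ, (p.edges.map c).count color = 1

/-- The conflict-free connection number: the least number of colors in a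
conflict-free connection coloring. -/
noncomputable def cfcNum {V : Type u} (G : SimpleGraph V) : ℕ :=
  sInf {n : ℕ | ∃ c : Sym2 V → ℕ, (∀ e ∈ G.edgeSet, c e < n) ∧ IsCFCColoring G c}

/-- The line graph of `G`. -/
def lineG {V : Type u} (G : SimpleGraph V) : SimpleGraph G.edgeSet where
  Adj e f := e ≠ f ∧ ∃ v : V, v ∈ (e : Sym2 V) ∧ v ∈ (f : Sym2 V)
  symm := ⟨by rintro e f ⟨h, v, hv, hw⟩; exact ⟨h.symm, v, hw, hv⟩⟩
  loopless := ⟨by rintro e ⟨h, _⟩; exact h rfl⟩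

/-- The `k`-iterated line graph, as a bundled pair (vertex type, graph). -/
def iterLine {V : Type u} (G : SimpleGraph V) : ℕ → (W : Type u) × SimpleGraph W
  | 0 => ⟨V, G⟩
  | n + 1 => ⟨(iterLine G n).2.edgeSet, lineG (iterLine G n).2⟩

/-- The subgraph of `G` induced by the set of cut-edges (bridges) of `G`. -/
def cutG {V : Type u} (G : SimpleGraph V) : SimpleGraph V :=
  SimpleGraph.fromEdgeSet {e | G.IsBridge e}

/-- `h(G)`: the maximum of `cfcNum(K)` over connected components `K` of `C(G)`. -/
noncomputable def hG {V : Type u} (G : SimpleGraph V) : ℕ :=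
  sSup (Set.range fun K : (cutG G).ConnectedComponent => cfcNum ((cutG G).induce K.supp))

/-- `G` is claw-free: no induced `K_{1,3}`. -/
def ClawFree {V : Type u} (G : SimpleGraph V) : Prop :=
  ∀ v a b c : V, G.Adj v a → G.Adj v b → G.Adj v c →
    a ≠ b → a ≠ c → b ≠ c → ¬G.Adj a b → ¬G.Adj a c → ¬G.Adj b c → False

/-- `G` has no cut vertex: deleting any vertex leaves a connected graph. -/
def NoCutVertex {V : Type u} (G : SimpleGraph V) : Prop :=
  ∀ v : V, (G.induce {w | w ≠ v}).Connected

/-- `B` is a block of `G`: a maximal vertex set inducing a connected subgraph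
without cut vertices. -/
def IsBlock {V : Type u} (G : SimpleGraph V) (B : Set V) : Prop :=
  (G.induce B).Connected ∧ NoCutVertex (G.induce B) ∧
    ∀ B' : Set V, B ⊆ B' → (G.induce B').Connected → NoCutVertex (G.induce B') → B' = B

/-- Every component of `C(G)` is a cut-path of `G`: `C(G)` is a linear forest
(acyclic with maximum degree at most 2) and every internal vertex (degree-2 vertex
of `C(G)`) has degree 2 in `G`. -/
def CutPathCondition {V : Type u} (G : SimpleGraph V) : Prop :=
  (cutG G).IsAcyclic ∧ (∀ v : V, ((cutG G).neighborSet v).ncard ≤ 2) ∧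
    ∀ v : V, ((cutG G).neighborSet v).ncard = 2 → (G.neighborSet v).ncard = 2

/-!
For the lower bound, a path of bridges is the only path between its ends, so every
conflict-free colouring of `G` restricts to one of each component of `C(G)`.

For the upper bound, fix a spanning tree `T` of `G`, give the bridges optimal colourings of
their components (colours `< h`), the other tree edges colour `0` and all remaining edges the
new colour `h`. Two vertices in one component of `C(G)` are joined inside it. Otherwise the
tree path between them contains a tree edge `f` which is not a bridge of `G`; a cycle through
`f` leaves the side of `T - f` containing one end of `f` along a non-tree, non-bridge edge,
and this edge, between tree paths on either side, is the only edge of colour `h`.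
-/

namespace SimpleGraph

variable {V : Type u} {G : SimpleGraph V}

lemma Walk.reachable_of_mem_support {u v z : V} (p : G.Walk u v) (hz : z ∈ p.support) :
    G.Reachable u z := by
  classical exact ⟨p.takeUntil z hz⟩

lemma ConnectedComponent.mem_supp_of_reachable (K : G.ConnectedComponent) {u z : V}
    (hu : u ∈ K.supp) (h : G.Reachable u z) : z ∈ K.supp := by
  rw [ConnectedComponent.mem_supp_iff] at hu ⊢
  exact hu ▸ (ConnectedComponent.sound h).symm

lemma Walk.IsPath.append_cons {u x y v : V} {p : G.Walk u x} {q : G.Walk y v} (hp : p.IsPath)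
    (hq : q.IsPath) (hxy : G.Adj x y) (hdisj : ∀ z ∈ p.support, z ∉ q.support) :
    (p.append (cons hxy q)).IsPath := by
  rw [Walk.isPath_def, Walk.support_append, Walk.support_cons, List.tail_cons, List.nodup_append]
  exact ⟨hp.support_nodup, hq.support_nodup, fun z hzp _ hzq hzz => hdisj z hzp (hzz ▸ hzq)⟩

lemma Reachable.reachable_deleteEdges_or {a b z : V} (h : G.Reachable a z) :
    (G.deleteEdges {s(a, b)}).Reachable a z ∨ (G.deleteEdges {s(a, b)}).Reachable b z := by
  suffices ∀ {x z : V} (w : G.Walk x z),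
      (G.deleteEdges {s(a, b)}).Reachable a x ∨ (G.deleteEdges {s(a, b)}).Reachable b x →
      (G.deleteEdges {s(a, b)}).Reachable a z ∨ (G.deleteEdges {s(a, b)}).Reachable b z from
    this h.some (.inl .rfl)
  intro x z w
  induction w with
  | nil => exact id
  | @cons x y z hxy w ih =>
    refine fun hx => ih ?_
    by_cases he : s(x, y) = s(a, b)
    · rcases Sym2.eq_iff.mp he with ⟨-, rfl⟩ | ⟨-, rfl⟩
      exacts [.inr .rfl, .inl .rfl]
    · have hxy' : (G.deleteEdges {s(a, b)}).Adj x y := deleteEdges_adj.mpr ⟨hxy, he⟩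
      exact hx.imp (·.trans hxy'.reachable) (·.trans hxy'.reachable)

theorem Walk.IsPath.eq_of_forall_isBridge {u v : V} {q : G.Walk u v} (hq : q.IsPath)
    (hbr : ∀ e ∈ q.edges, G.IsBridge e) {p : G.Walk u v} (hp : p.IsPath) : p = q := by
  induction q with
  | nil => exact (Walk.isPath_iff_nil.mp hp).eq_nil
  | @cons a w b haw q ih =>
    rw [Walk.cons_isPath_iff] at hq
    cases p with
    | nil => exact absurd q.end_mem_support hq.2
    | @cons _ x _ hax p =>
      rw [Walk.cons_isPath_iff] at hp
      by_cases hxw : x = w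
      · subst hxw
        rw [ih hq.1 (fun e he => hbr e (by simp [he])) hp.1]
      · refine absurd ?_ (isBridge_iff.mp (hbr s(a, w) (by simp)))
        rw [reachable_deleteEdges_iff_exists_walk]
        refine ⟨.cons hax (p.append q.reverse), ?_⟩
        have hpa : s(a, w) ∉ p.edges := fun h => hp.2 (p.fst_mem_support_of_mem_edges h)
        have hqa : s(a, w) ∉ q.edges := fun h => hq.2 (q.fst_mem_support_of_mem_edges h)
        simp only [Walk.edges_cons, Walk.edges_append, Walk.edges_reverse, List.mem_cons,
          List.mem_append, List.mem_reverse, hpa, hqa, or_false, Sym2.eq_iff, true_and]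
        rintro (rfl | ⟨-, rfl⟩)
        exacts [hxw rfl, haw.ne rfl]

lemma Walk.IsPath.not_reachable_deleteEdges {u v : V} {q : G.Walk u v} (hq : q.IsPath)
    (hbr : ∀ e ∈ q.edges, G.IsBridge e) {e : Sym2 V} (he : e ∈ q.edges) :
    ¬(G.deleteEdges {e}).Reachable u v := by
  classical
  rintro ⟨r⟩
  have hrq := hq.eq_of_forall_isBridge hbr (r.toPath.2.mapLe (G.deleteEdges_le {e}))
  rw [← hrq, Walk.edges_mapLe_eq_edges] at he
  simpa using (r.toPath : (G.deleteEdges {e}).Walk u v).edges_subset_edgeSet he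

lemma exists_adj_not_isBridge_of_mem_of_notMem {a b : V} (hab : G.Adj a b)
    (hnb : ¬G.IsBridge s(a, b)) {S : Set V} (ha : a ∈ S) (hb : b ∉ S) :
    ∃ x y, G.Adj x y ∧ ¬G.IsBridge s(x, y) ∧ s(x, y) ≠ s(a, b) ∧ x ∈ S ∧ y ∉ S := by
  classical
  rw [isBridge_iff, not_not, reachable_deleteEdges_iff_exists_walk] at hnb
  obtain ⟨w, hw⟩ := hnb
  let p := w.bypass
  have hp : p.IsPath := w.bypass_isPath
  have hpab : s(a, b) ∉ p.edges := fun h => hw (w.edges_bypass_subset_edges h)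
  obtain ⟨d, hd, hdS, hdS'⟩ := p.exists_boundary_dart S ha hb
  have hdp : d.edge ∈ p.edges := List.mem_map_of_mem hd
  have hcyc : (Walk.cons hab.symm p).IsCycle :=
    (Walk.cons_isCycle_iff _ _).mpr ⟨hp, by rwa [Sym2.eq_swap]⟩
  refine ⟨d.fst, d.snd, d.adj, fun hbr => hbr.notMem_edges_of_isCycle hcyc ?_,
    fun h => hpab (h ▸ hdp), hdS, hdS'⟩
  exact List.mem_cons_of_mem _ hdp

lemma cfcNum_le {c : Sym2 V → ℕ} {n : ℕ} (hc : ∀ e ∈ G.edgeSet, c e < n)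
    (hcfc : IsCFCColoring G c) : cfcNum G ≤ n :=
  Nat.sInf_le ⟨c, hc, hcfc⟩

lemma Connected.isCFCColoring_of_injective (hconn : G.Connected) {c : Sym2 V → ℕ}
    (hc : Function.Injective c) : IsCFCColoring G c := by
  classical
  intro u v huv
  obtain ⟨p, hp⟩ := (hconn u v).some.toPath
  obtain ⟨e, he⟩ := List.exists_mem_of_ne_nil p.edges (by simpa using p.not_nil_of_ne huv)
  exact ⟨p, hp, c e, List.count_eq_one_of_mem (hp.isTrail.edges_nodup.map hc)
    (List.mem_map_of_mem he)⟩

lemma Connected.exists_isCFCColoring [Finite V] (hconn : G.Connected) :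
    ∃ c : Sym2 V → ℕ, (∀ e ∈ G.edgeSet, c e < cfcNum G) ∧ IsCFCColoring G c := by
  obtain ⟨n, ⟨eqv⟩⟩ := Finite.exists_equiv_fin (Sym2 V)
  exact Nat.sInf_mem (s := {n | ∃ c : Sym2 V → ℕ, (∀ e ∈ G.edgeSet, c e < n) ∧ IsCFCColoring G c})
    ⟨n, fun e => eqv e, fun e _ => (eqv e).isLt,
    hconn.isCFCColoring_of_injective (Fin.val_injective.comp eqv.injective)⟩

lemma mem_edgeSet_cutG {e : Sym2 V} : e ∈ (cutG G).edgeSet ↔ G.IsBridge e := by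
  rw [cutG, edgeSet_fromEdgeSet, Set.mem_sdiff, Set.mem_ofPred_eq, and_iff_left_iff_imp]
  intro he
  induction e using Sym2.ind with
  | _ x y =>
    rintro (rfl : x = y)
    exact isBridge_iff.mp he (Reachable.refl x)

lemma Connected.cutG_le (hconn : G.Connected) : cutG G ≤ G :=
  fun x y h => (mem_edgeSet_cutG.mp h).reachable_iff_adj.mp (hconn x y)

lemma Walk.exists_not_isBridge_of_not_reachable_cutG {u v : V} (p : G.Walk u v)
    (h : ¬(cutG G).Reachable u v) : ∃ e ∈ p.edges, ¬G.IsBridge e := by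
  by_contra! hbr
  exact h ⟨p.transfer (cutG G) fun e he => mem_edgeSet_cutG.mpr (hbr e he)⟩

lemma Connected.cfcNum_induce_supp_cutG_le [Finite V] (hconn : G.Connected)
    (K : (cutG G).ConnectedComponent) : cfcNum ((cutG G).induce K.supp) ≤ cfcNum G := by
  classical
  obtain ⟨c, hc, hcfc⟩ := hconn.exists_isCFCColoring
  refine cfcNum_le (c := c ∘ Sym2.map (↑)) (fun e he => hc _ ?_) ?_
  · exact edgeSet_mono hconn.cutG_le ((Embedding.induce K.supp).toHom.map_mem_edgeSet he)
  rintro ⟨u, hu⟩ ⟨v, hv⟩ huv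
  obtain ⟨p, hp, col, hcol⟩ := hcfc u v (by simpa using huv)
  obtain ⟨r, hr⟩ := (K.reachable_of_mem_supp hu hv).some.toPath
  have hpr : p = r.mapLe hconn.cutG_le := by
    refine (hr.mapLe hconn.cutG_le).eq_of_forall_isBridge (fun e he => ?_) hp
    rw [Walk.edges_mapLe_eq_edges] at he
    exact mem_edgeSet_cutG.mp (r.edges_subset_edgeSet he)
  have hsupp : ∀ z ∈ r.support, z ∈ K.supp := fun z hz =>
    K.mem_supp_of_reachable hu (r.reachable_of_mem_support hz)
  refine ⟨r.induce K.supp hsupp, ?_, col, ?_⟩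
  · exact .of_map (f := (Embedding.induce (G := cutG G) K.supp).toHom) (by rwa [Walk.map_induce])
  · have hedges := congrArg Walk.edges (Walk.map_induce r hsupp)
    rw [Walk.edges_map] at hedges
    rw [← List.map_map]
    convert hcol
    rw [hpr, Walk.edges_mapLe_eq_edges]
    exact hedges

theorem Connected.hG_le_cfcNum [Finite V] (hconn : G.Connected) : hG G ≤ cfcNum G :=
  csSup_le' (by rintro _ ⟨K, rfl⟩; exact hconn.cfcNum_induce_supp_cutG_le K)

lemma exists_coloring_of_forall_cfcNum_induce_supp_le [Finite V] (H : SimpleGraph V) {n : ℕ}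
    (hn : ∀ K : H.ConnectedComponent, cfcNum (H.induce K.supp) ≤ n) :
    ∃ c : Sym2 V → ℕ, (∀ e ∈ H.edgeSet, c e < n) ∧ ∀ u v, u ≠ v → H.Reachable u v →
      ∃ p : H.Walk u v, p.IsPath ∧ ∃ col, (p.edges.map c).count col = 1 := by
  have hK : ∀ K : H.ConnectedComponent, (H.induce K.supp).Connected :=
    fun K => K.connected_toSimpleGraph
  choose cK hcK hcfcK using fun K => (hK K).exists_isCFCColoring
  -- An edge takes its colour from the component of either endpoint (`e.out.1` is one of them),
  -- pulled back along the injective `Sym2.map Subtype.val`.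
  let comp (e : Sym2 V) : H.ConnectedComponent := H.connectedComponentMk e.out.1
  let c (e : Sym2 V) : ℕ := Function.extend (Sym2.map Subtype.val) (cK (comp e)) 0 e
  have hc : ∀ K (e : Sym2 K.supp), c (e.map Subtype.val) = cK K e := by
    intro K e
    have hcomp : comp (e.map Subtype.val) = K := by
      obtain ⟨x, -, hx⟩ := Sym2.mem_map.mp (Sym2.out_fst_mem (e.map Subtype.val))
      exact (congrArg H.connectedComponentMk hx).symm.trans x.2
    simp only [c]
    rw [hcomp]
    exact (Sym2.map.injective Subtype.val_injective).extend_apply _ _ _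
  refine ⟨c, fun e he => ?_, fun u v huv hreach => ?_⟩
  · induction e using Sym2.ind with
    | _ x y =>
      obtain ⟨K, hx⟩ : ∃ K : H.ConnectedComponent, x ∈ K.supp := ⟨_, rfl⟩
      have hy : y ∈ K.supp := K.mem_supp_of_reachable hx (H.mem_edgeSet.mp he).reachable
      have hxy : s((⟨x, hx⟩ : K.supp), ⟨y, hy⟩) ∈ (H.induce K.supp).edgeSet := he
      exact (hc K _ ▸ hcK K _ hxy).trans_le (hn K)
  · obtain ⟨K, hu⟩ : ∃ K : H.ConnectedComponent, u ∈ K.supp := ⟨_, rfl⟩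
    obtain ⟨q, hq, col, hcol⟩ := hcfcK K ⟨u, hu⟩ ⟨v, K.mem_supp_of_reachable hu hreach⟩
      (fun h => huv congr($h.1))
    let φ : H.induce K.supp ↪g H := Embedding.induce K.supp
    have hcount : ((q.map φ.toHom).edges.map c).count col = 1 := by
      rw [Walk.edges_map, List.map_map]
      convert hcol using 3
      exact funext (hc K)
    exact ⟨q.map φ.toHom, hq.map φ.injective, col, hcount⟩

lemma exists_isPath_count_eq_one_of_adj {H : SimpleGraph V} (hHG : H ≤ G) {c : Sym2 V → ℕ}
    {k : ℕ} (hcH : ∀ e ∈ H.edgeSet, c e ≠ k) {u x y v : V} (hux : H.Reachable u x)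
    (hxy : G.Adj x y) (hcxy : c s(x, y) = k) (hyv : H.Reachable y v)
    (hnxy : ¬H.Reachable x y) : ∃ p : G.Walk u v, p.IsPath ∧ (p.edges.map c).count k = 1 := by
  classical
  obtain ⟨p, hp⟩ := hux.some.toPath
  obtain ⟨q, hq⟩ := hyv.some.toPath
  have hdisj : ∀ z ∈ (p.mapLe hHG).support, z ∉ (q.mapLe hHG).support := by
    simp only [Walk.support_mapLe_eq_support]
    exact fun z hzp hzq => hnxy <| (hux.symm.trans (p.reachable_of_mem_support hzp)).trans
      (q.reachable_of_mem_support hzq).symm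
  have hzero : ∀ {a b : V} (r : H.Walk a b), ((r.mapLe hHG).edges.map c).count k = 0 := by
    intro a b r
    rw [List.count_eq_zero, Walk.edges_mapLe_eq_edges]
    simpa using fun e he => hcH e (r.edges_subset_edgeSet he)
  refine ⟨(p.mapLe hHG).append (.cons hxy (q.mapLe hHG)),
    (hp.mapLe hHG).append_cons (hq.mapLe hHG) hxy hdisj, ?_⟩
  rw [Walk.edges_append, Walk.edges_cons, List.map_append, List.map_cons, List.count_append,
    List.count_cons, hzero, hzero, hcxy]
  simp

lemma exists_isPath_count_eq_one_of_not_reachable_cutG {T : SimpleGraph V} (hTG : T ≤ G)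
    (hT : T.IsTree) {c : Sym2 V → ℕ} {k : ℕ} (hcT : ∀ e ∈ T.edgeSet, c e ≠ k)
    (hck : ∀ e ∈ G.edgeSet, e ∉ T.edgeSet → ¬G.IsBridge e → c e = k)
    {u v : V} (huv : ¬(cutG G).Reachable u v) :
    ∃ p : G.Walk u v, p.IsPath ∧ (p.edges.map c).count k = 1 := by
  classical
  obtain ⟨P, hP⟩ := (hT.connected u v).some.toPath
  obtain ⟨f, hfP, hf⟩ := (P.mapLe hTG).exists_not_isBridge_of_not_reachable_cutG huv
  rw [Walk.edges_mapLe_eq_edges] at hfP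
  have hPbr : ∀ e ∈ P.edges, T.IsBridge e := fun e he =>
    isAcyclic_iff_forall_isBridge.mp hT.isAcyclic (P.edges_subset_edgeSet he)
  have hsep := hP.not_reachable_deleteEdges hPbr hfP
  have hside : ∀ a b z, (T.deleteEdges {s(a, b)}).Reachable a z ∨
      (T.deleteEdges {s(a, b)}).Reachable b z := fun a b z =>
    (hT.connected a z).reachable_deleteEdges_or
  induction f using Sym2.ind with
  | _ a b =>
  wlog hau : (T.deleteEdges {s(a, b)}).Reachable a u generalizing a b
  · have hbu := (hside a b u).resolve_left hau
    rw [Sym2.eq_swap] at hfP hf hsep hbu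
    exact this b a hfP hf hsep hbu
  have hnab : ¬(T.deleteEdges {s(a, b)}).Reachable a b := isBridge_iff.mp (hPbr _ hfP)
  have hbside : ∀ z, ¬(T.deleteEdges {s(a, b)}).Reachable a z →
      (T.deleteEdges {s(a, b)}).Reachable b z := fun z => (hside a b z).resolve_left
  obtain ⟨x, y, hxy, hxyb, hxyab, hx, hy⟩ := exists_adj_not_isBridge_of_mem_of_notMem
    (hTG (P.adj_of_mem_edges hfP)) hf (S := {z | (T.deleteEdges {s(a, b)}).Reachable a z})
    .rfl hnab
  have hxyT : s(x, y) ∉ T.edgeSet := fun h =>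
    hy (hx.trans (deleteEdges_adj.mpr ⟨h, hxyab⟩).reachable)
  exact exists_isPath_count_eq_one_of_adj ((deleteEdges_le _).trans hTG)
    (fun e he => hcT e (edgeSet_mono (deleteEdges_le _) he)) (hau.symm.trans hx) hxy
    (hck _ hxy hxyT hxyb) ((hbside y hy).symm.trans (hbside v fun h => hsep (hau.symm.trans h)))
    (fun h => hy (hx.trans h))

theorem Connected.cfcNum_le_hG_add_one [Finite V] (hconn : G.Connected)
    (hbridge : ∃ e, G.IsBridge e) : cfcNum G ≤ hG G + 1 := by
  classical
  obtain ⟨T, hTG, hT⟩ := hconn.exists_isTree_le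
  obtain ⟨cC, hcC, hcfcC⟩ := exists_coloring_of_forall_cfcNum_induce_supp_le (cutG G) (n := hG G)
    fun K => le_csSup (Set.finite_range _).bddAbove ⟨K, rfl⟩
  have hbr : ∀ e, G.IsBridge e → cC e < hG G := fun e he => hcC e (mem_edgeSet_cutG.mpr he)
  have hpos : 0 < hG G := let ⟨e, he⟩ := hbridge; (Nat.zero_le _).trans_lt (hbr e he)
  let c (e : Sym2 V) : ℕ := if G.IsBridge e then cC e else if e ∈ T.edgeSet then 0 else hG G
  refine cfcNum_le (c := c) (fun e _ => ?_) fun u v huv => ?_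
  · simp only [c]
    split_ifs with he
    exacts [(hbr e he).trans (Nat.lt_succ_self _), Nat.succ_pos _, Nat.lt_succ_self _]
  by_cases hreach : (cutG G).Reachable u v
  · obtain ⟨p, hp, col, hcol⟩ := hcfcC u v huv hreach
    refine ⟨p.mapLe hconn.cutG_le, hp.mapLe _, col, ?_⟩
    have hcp : p.edges.map c = p.edges.map cC := List.map_congr_left fun e he => by
      simp [c, mem_edgeSet_cutG.mp (p.edges_subset_edgeSet he)]
    rwa [Walk.edges_mapLe_eq_edges, hcp]
  · have hcT : ∀ e ∈ T.edgeSet, c e ≠ hG G := fun e he => by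
      simp only [c, he]
      split_ifs with hb
      exacts [(hbr e hb).ne, hpos.ne]
    obtain ⟨p, hp, hcount⟩ := exists_isPath_count_eq_one_of_not_reachable_cutG hTG hT hcT
      (fun e _ heT he => by simp [c, he, heT]) hreach
    exact ⟨p, hp, _, hcount⟩

end SimpleGraph

/-- h(G) ≤ cfc(G) ≤ h(G) + 1 for a connected graph with a cut-edge. -/
theorem stmt_12 {V : Type u} [Fintype V] (G : SimpleGraph V) (hconn : G.Connected)
    (hbridge : ∃ e, G.IsBridge e) :
    hG G ≤ cfcNum G ∧ cfcNum G ≤ hG G + 1 :=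
  ⟨hconn.hG_le_cfcNum, hconn.cfcNum_le_hG_add_one hbridge⟩
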